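/- arXiv:math/0506300 — 6 statements merged into one kernel-verified Lean document; each statement's English description precedes it below -/
import Mathlib

section
/- For every n >= 1 and every t in [-pi, pi], |phi_n(t)| <= exp( - t^2 v_n^2 / 6 ). -/
/-!
A Bernoulli variable with success probability `a` has characteristic function
`1 + a (e^{it} - 1)`, of squared modulus `1 - 2a(1-a)(1 - cos t) ≤ exp (-2a(1-a)(1 - cos t))`.
On `[-π, π]` we have `1 - cos t ≥ 2t²/π² ≥ t²/6`, and by independence the characteristic
function of the sum is the product of these factors; centering only changes it by a unimodular
factor.
-/

open MeasureTheory ProbabilityTheory Finset Complex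

lemma Real.sq_div_six_le_one_sub_cos {x : ℝ} (hx : |x| ≤ Real.pi) :
    x ^ 2 / 6 ≤ 1 - Real.cos x := by
  have hπ : Real.pi ^ 2 ≤ 12 := by nlinarith [Real.pi_lt_d2, Real.pi_pos]
  have hquad : x ^ 2 / 6 ≤ 2 / Real.pi ^ 2 * x ^ 2 := by
    rw [div_mul_eq_mul_div, div_le_div_iff₀ (by norm_num) (by positivity)]
    nlinarith [sq_nonneg x]
  linarith [Real.cos_le_one_sub_mul_cos_sq hx]

lemma Complex.normSq_one_add_exp_sub_one_mul (a t : ℝ) :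
    normSq (1 + (exp (t * I) - 1) * a) = 1 - 2 * (a * (1 - a)) * (1 - Real.cos t) := by
  rw [exp_mul_I, ← ofReal_cos, ← ofReal_sin]
  simp only [normSq_apply, add_re, add_im, mul_re, mul_im, one_re, one_im, sub_re, sub_im,
    ofReal_re, ofReal_im, I_re, I_im]
  linear_combination (a ^ 2) * Real.sin_sq_add_cos_sq t

lemma Complex.norm_one_add_exp_sub_one_mul_le {a t : ℝ} (ha₀ : 0 ≤ a) (ha₁ : a ≤ 1)
    (ht : |t| ≤ Real.pi) :
    ‖1 + (exp (t * I) - 1) * a‖ ≤ Real.exp (-(t ^ 2 * (a * (1 - a))) / 6) := by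
  have hvar : 0 ≤ a * (1 - a) := mul_nonneg ha₀ (by linarith)
  have hcos := Real.sq_div_six_le_one_sub_cos ht
  rw [← Real.sqrt_sq (Real.exp_nonneg _), ← Real.exp_nat_mul, norm_def,
    normSq_one_add_exp_sub_one_mul]
  gcongr
  calc 1 - 2 * (a * (1 - a)) * (1 - Real.cos t)
      ≤ Real.exp (-(2 * (a * (1 - a)) * (1 - Real.cos t))) := by
        linarith [Real.add_one_le_exp (-(2 * (a * (1 - a)) * (1 - Real.cos t)))]
    _ ≤ _ := by
        gcongr
        push_cast
        nlinarith [mul_le_mul_of_nonneg_left hcos hvar]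

section

variable {Ω : Type*} [MeasurableSpace Ω] {μ : Measure Ω}

lemma norm_integral_exp_mul_sub_const_eq_norm_charFun {f : Ω → ℝ} (hf : AEMeasurable f μ)
    (c t : ℝ) :
    ‖∫ ω, exp (I * t * ((f ω - c : ℝ) : ℂ)) ∂μ‖ = ‖charFun (μ.map f) t‖ := by
  have hsplit (ω : Ω) : exp (I * t * ((f ω - c : ℝ) : ℂ))
      = exp (t * f ω * I) * exp ((-(t * c) : ℝ) * I) := by
    rw [← exp_add]
    push_cast
    ring_nf
  rw [charFun_apply_real, integral_map hf (by fun_prop)]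
  simp_rw [hsplit, integral_mul_const, norm_mul, norm_exp_ofReal_mul_I, mul_one]

lemma charFun_map_of_zero_or_one [IsProbabilityMeasure μ] {X : Ω → ℝ} (hX : Measurable X)
    (h01 : ∀ ω, X ω = 0 ∨ X ω = 1) (t : ℝ) :
    charFun (μ.map X) t = 1 + (exp (t * I) - 1) * μ.real {ω | X ω = 1} := by
  have hM : MeasurableSet {ω | X ω = 1} := hX (measurableSet_singleton 1)
  have hind : X = Set.indicator {ω | X ω = 1} 1 := by
    ext ω
    rcases h01 ω with h | h <;> simp [h]
  have hint : Integrable X μ := hind ▸ (integrable_const 1).indicator hM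
  have hmean : ∫ ω, X ω ∂μ = μ.real {ω | X ω = 1} := by
    conv_lhs => rw [hind]
    exact integral_indicator_one hM
  have hlin (ω : Ω) : exp (t * X ω * I) = 1 + (exp (t * I) - 1) * (X ω : ℂ) := by
    rcases h01 ω with h | h <;> simp [h]
  rw [charFun_apply_real, integral_map hX.aemeasurable (by fun_prop)]
  simp_rw [hlin]
  rw [integral_add (integrable_const 1) (hint.ofReal.const_mul _), integral_const_mul,
    integral_complex_ofReal, hmean]
  simp

lemma norm_charFun_map_of_zero_or_one_le [IsProbabilityMeasure μ] {X : Ω → ℝ}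
    (hX : Measurable X) (h01 : ∀ ω, X ω = 0 ∨ X ω = 1) {p : ℝ}
    (hp : μ {ω | X ω = 1} = ENNReal.ofReal p) {t : ℝ} (ht : |t| ≤ Real.pi) :
    ‖charFun (μ.map X) t‖ ≤ Real.exp (-(t ^ 2 * (p * (1 - p))) / 6) := by
  set a := μ.real {ω | X ω = 1}
  -- `ENNReal.ofReal` truncates a negative `p` to `0`, and then `p * (1 - p) ≤ 0`.
  have hpa : p * (1 - p) ≤ a * (1 - a) := by
    have ha : a = max p 0 := by simp only [a, measureReal_def, hp, ENNReal.toReal_ofReal']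
    rcases le_total 0 p with h | h
    · simp [ha, h]
    · simp only [ha, max_eq_right h]
      nlinarith
  rw [charFun_map_of_zero_or_one hX h01]
  refine (norm_one_add_exp_sub_one_mul_le measureReal_nonneg measureReal_le_one ht).trans ?_
  gcongr

end

theorem charFn_of_sum_bernoulli_bound_general
    {Ω : Type*} [MeasurableSpace Ω] (μ : Measure Ω) [IsProbabilityMeasure μ]
    (X : ℕ → Ω → ℝ) (p : ℕ → ℝ)
    (hmeas : ∀ j, Measurable (X j))
    (h01 : ∀ j ω, X j ω = 0 ∨ X j ω = 1)
    (hindep : iIndepFun X μ)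
    (hp : ∀ j, μ {ω | X j ω = 1} = ENNReal.ofReal (p j))
    (n : ℕ) (t : ℝ) (ht : t ∈ Set.Icc (-Real.pi) Real.pi) :
    ‖∫ ω, Complex.exp (Complex.I * (t : ℂ) *
        (((∑ j ∈ range n, X j ω) - ∑ j ∈ range n, p j : ℝ) : ℂ)) ∂μ‖
      ≤ Real.exp (-(t ^ 2 * ∑ j ∈ range n, p j * (1 - p j)) / 6) := by
  have hfactor (j : ℕ) :
      ‖charFun (μ.map (X j)) t‖ ≤ Real.exp (-(t ^ 2 * (p j * (1 - p j))) / 6) :=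
    norm_charFun_map_of_zero_or_one_le (hmeas j) (h01 j) (hp j) (abs_le.mpr ht)
  rw [norm_integral_exp_mul_sub_const_eq_norm_charFun (by fun_prop),
    (iIndepFun_iff_finset.1 hindep (range n)).charFun_map_fun_finsetSum_eq_prod
      (fun j _ ↦ (hmeas j).aemeasurable), prod_apply, norm_prod]
  calc ∏ j ∈ range n, ‖charFun (μ.map (X j)) t‖
      ≤ ∏ j ∈ range n, Real.exp (-(t ^ 2 * (p j * (1 - p j))) / 6) :=
        prod_le_prod (fun j _ ↦ norm_nonneg _) (fun j _ ↦ hfactor j)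
    _ = Real.exp (-(t ^ 2 * ∑ j ∈ range n, p j * (1 - p j)) / 6) := by
        rw [← Real.exp_sum, mul_sum, ← sum_div, sum_neg_distrib]

/-- Lemma 2.1 (bound part): for `X_n` a sum of independent Bernoulli variables with
success probabilities `p j` and `v_n² = ∑ p_j q_j`, the characteristic function of the
centered sum satisfies `|φ_n(t)| ≤ exp(-t² v_n² / 6)` for all `t ∈ [-π, π]`. -/
theorem charFn_of_sum_bernoulli_bound
    {Ω : Type*} [MeasurableSpace Ω] (μ : Measure Ω) [IsProbabilityMeasure μ]
    (X : ℕ → Ω → ℝ) (p : ℕ → ℝ)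
    (hmeas : ∀ j, Measurable (X j))
    (h01 : ∀ j ω, X j ω = 0 ∨ X j ω = 1)
    (hindep : iIndepFun X μ)
    (hp : ∀ j, μ {ω | X j ω = 1} = ENNReal.ofReal (p j))
    (n : ℕ) (hn : 1 ≤ n) (t : ℝ) (ht : t ∈ Set.Icc (-Real.pi) Real.pi) :
    ‖∫ ω, Complex.exp (Complex.I * (t : ℂ) *
        (((∑ j ∈ range n, X j ω) - ∑ j ∈ range n, p j : ℝ) : ℂ)) ∂μ‖
      ≤ Real.exp (-(t ^ 2 * ∑ j ∈ range n, p j * (1 - p j)) / 6) :=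
  charFn_of_sum_bernoulli_bound_general μ X p hmeas h01 hindep hp n t ht
end

section
/- Assume Condition 2.1 holds with constants epsilon > 0 and n_epsilon. Let K > 0, let C >= 6 K / epsilon, and set a_n = sqrt( C log n / n ). Then for every bounded measurable function f on [-pi, pi] and every n >= n_epsilon with a_n <= pi, | Integral_{a_n < |t| <= pi} f(t) phi_n(t) dt | <= 2 pi ||f||_infty n^{-K}, where ||f||_infty = sup_{|t| <= pi} |f(t)|. -/
/-!
The characteristic function of a centred sum of independent Bernoulli variables factorises, and
the Bernoulli factor satisfies `|1 - q + q e^{it}|² = 1 - 2q(1 - q)(1 - cos t) ≤ e^{-2q(1-q)(1-cos t)}`.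
Hence `|φ_n(t)| ≤ exp(-v_n² (1 - cos t)) ≤ exp(-(2ε/π²) n t²)` by `1 - cos t ≥ 2t²/π²` on `[-π, π]`,
and for `|t| > a_n` this is at most `n^{-2εC/π²} ≤ n^{-K}` since `π² ≤ 12`. Integrating the bound
over a set of length at most `2π` gives the claim.
-/

open MeasureTheory ProbabilityTheory Finset

open Complex in
lemma norm_one_add_mul_exp_sub_one_le (q t : ℝ) :
    ‖1 + q * (cexp (t * I) - 1)‖ ≤ Real.exp (-(q * (1 - q) * (1 - Real.cos t))) := by
  have hsq : ‖1 + q * (cexp (t * I) - 1)‖ ^ 2 = 1 - 2 * (q * (1 - q) * (1 - Real.cos t)) := by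
    rw [exp_mul_I, ← ofReal_cos, ← ofReal_sin, Complex.sq_norm, normSq_apply]
    simp only [add_re, add_im, mul_re, mul_im, sub_re, sub_im, ofReal_re, ofReal_im, one_re,
      one_im, I_re, I_im]
    linear_combination q ^ 2 * Real.sin_sq_add_cos_sq t
  refine (pow_le_pow_iff_left₀ (norm_nonneg _) (Real.exp_nonneg _) two_ne_zero).mp ?_
  rw [hsq, ← Real.exp_nat_mul, Nat.cast_ofNat]
  linarith [Real.add_one_le_exp (2 * -(q * (1 - q) * (1 - Real.cos t)))]

open Complex in
lemma charFun_map_of_forall_eq_zero_or_eq_one {Ω : Type*} [MeasurableSpace Ω] {μ : Measure Ω}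
    [IsProbabilityMeasure μ] {Y : Ω → ℝ} (hY : Measurable Y) (h01 : ∀ ω, Y ω = 0 ∨ Y ω = 1)
    (t : ℝ) : charFun (μ.map Y) t = 1 + μ.real {ω | Y ω = 1} * (cexp (t * I) - 1) := by
  have hA : MeasurableSet {ω | Y ω = 1} := hY (measurableSet_singleton 1)
  have hpt : (fun ω ↦ cexp (t * Y ω * I)) =
      fun ω ↦ 1 + {ω | Y ω = 1}.indicator (fun _ ↦ cexp (t * I) - 1) ω := by
    ext ω
    rcases h01 ω with h | h <;> simp [h]
  rw [charFun_apply_real, integral_map hY.aemeasurable (by fun_prop), hpt,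
    integral_add (integrable_const _) ((integrable_const _).indicator hA),
    integral_indicator_const _ hA]
  simp [Complex.real_smul]

lemma norm_charFun_map_sum_le {Ω ι : Type*} [MeasurableSpace Ω] {μ : Measure Ω}
    [IsProbabilityMeasure μ] {X : ι → Ω → ℝ} (hmeas : ∀ j, Measurable (X j))
    (h01 : ∀ j ω, X j ω = 0 ∨ X j ω = 1) (hindep : iIndepFun X μ) (s : Finset ι) (t : ℝ) :
    ‖charFun (μ.map fun ω ↦ ∑ j ∈ s, X j ω) t‖ ≤
      Real.exp (-(∑ j ∈ s, μ.real {ω | X j ω = 1} * (1 - μ.real {ω | X j ω = 1})) *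
        (1 - Real.cos t)) := by
  rw [(hindep.restrict s).charFun_map_fun_finsetSum_eq_prod (fun j _ ↦ (hmeas j).aemeasurable),
    Finset.prod_apply, norm_prod, neg_mul, Finset.sum_mul, ← Finset.sum_neg_distrib, Real.exp_sum]
  refine Finset.prod_le_prod (fun _ _ ↦ norm_nonneg _) fun j _ ↦ ?_
  rw [charFun_map_of_forall_eq_zero_or_eq_one (hmeas j) (h01 j)]
  exact norm_one_add_mul_exp_sub_one_le _ t

open Complex in
lemma norm_integral_exp_I_mul_sub_eq_norm_charFun {Ω : Type*} [MeasurableSpace Ω]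
    {μ : Measure Ω} {Y : Ω → ℝ} (hY : Measurable Y) (t c : ℝ) :
    ‖∫ ω, cexp (I * t * ((Y ω - c : ℝ) : ℂ)) ∂μ‖ = ‖charFun (μ.map Y) t‖ := by
  have hpt : (fun ω ↦ cexp (I * t * ((Y ω - c : ℝ) : ℂ))) =
      fun ω ↦ cexp (t * Y ω * I) * cexp ((-(t * c) : ℝ) * I) := by
    ext ω
    rw [← Complex.exp_add]
    push_cast
    ring_nf
  rw [hpt, integral_mul_const, norm_mul, norm_exp_ofReal_mul_I, mul_one, charFun_apply_real,
    integral_map hY.aemeasurable (by fun_prop)]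

lemma mul_one_sub_le_measureReal_mul_one_sub {Ω : Type*} [MeasurableSpace Ω] {μ : Measure Ω}
    {A : Set Ω} {p : ℝ} (hA : μ A = ENNReal.ofReal p) :
    p * (1 - p) ≤ μ.real A * (1 - μ.real A) := by
  rw [measureReal_def, hA, ENNReal.toReal_ofReal']
  rcases le_total 0 p with h | h
  · rw [max_eq_left h]
  · rw [max_eq_right h]
    nlinarith

lemma exp_neg_mul_one_sub_cos_le_rpow {ε K C : ℝ} (hε : 0 < ε) (hK : 0 < K) (hC : 6 * K / ε ≤ C)
    {n : ℕ} (hn : 1 ≤ n) {t : ℝ} (ht : Real.sqrt (C * Real.log n / n) < |t|)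
    (htπ : |t| ≤ Real.pi) :
    Real.exp (-(ε * n) * (1 - Real.cos t)) ≤ (n : ℝ) ^ (-K) := by
  have hn0 : (0 : ℝ) < n := by exact_mod_cast hn
  have hlog : 0 ≤ Real.log n := Real.log_nonneg (by exact_mod_cast hn)
  have hεC : 6 * K ≤ ε * C := by rw [div_le_iff₀ hε] at hC; linarith
  have hC0 : 0 ≤ C := by nlinarith
  have hπ : Real.pi ^ 2 ≤ 12 := by nlinarith [Real.pi_lt_d2, Real.pi_pos]
  have ht2 : C * Real.log n / n ≤ t ^ 2 := by
    rw [← sq_abs]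
    exact ((Real.sqrt_lt' ((Real.sqrt_nonneg _).trans_lt ht)).mp ht).le
  have hcos : 2 / Real.pi ^ 2 * t ^ 2 ≤ 1 - Real.cos t := by
    linarith [Real.cos_le_one_sub_mul_cos_sq htπ]
  have hkey : K * Real.log n ≤ ε * n * (1 - Real.cos t) :=
    calc K * Real.log n ≤ 2 / Real.pi ^ 2 * (ε * C * Real.log n) := by
          rw [div_mul_eq_mul_div, le_div_iff₀ (by positivity)]
          nlinarith [mul_nonneg hK.le hlog, mul_nonneg (mul_nonneg hε.le hC0) hlog]
      _ = ε * n * (2 / Real.pi ^ 2 * (C * Real.log n / n)) := by field_simp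
      _ ≤ ε * n * (2 / Real.pi ^ 2 * t ^ 2) := by gcongr
      _ ≤ ε * n * (1 - Real.cos t) := by gcongr
  rw [Real.rpow_def_of_pos hn0, Real.exp_le_exp]
  linarith

lemma norm_setIntegral_le_of_subset_Icc {E : Type*} [NormedAddCommGroup E] [NormedSpace ℝ E]
    {g : ℝ → E} {S : Set ℝ} {a b B : ℝ} (hab : a ≤ b) (hS : S ⊆ Set.Icc a b) (hB : 0 ≤ B)
    (hg : ∀ t ∈ S, ‖g t‖ ≤ B) : ‖∫ t in S, g t‖ ≤ B * (b - a) := by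
  have hvol : volume.real S ≤ b - a := by
    simpa [hab] using measureReal_mono (μ := volume) hS (by simp)
  calc ‖∫ t in S, g t‖ ≤ B * volume.real S :=
        norm_setIntegral_le_of_norm_le_const ((measure_mono hS).trans_lt (by simp)) hg
    _ ≤ B * (b - a) := by gcongr

theorem tail_integral_of_charFn_bound_general
    {Ω : Type*} [MeasurableSpace Ω] (μ : Measure Ω) [IsProbabilityMeasure μ]
    (X : ℕ → Ω → ℝ) (p : ℕ → ℝ)
    (hmeas : ∀ j, Measurable (X j))
    (h01 : ∀ j ω, X j ω = 0 ∨ X j ω = 1)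
    (hindep : iIndepFun X μ)
    (hp : ∀ j, μ {ω | X j ω = 1} = ENNReal.ofReal (p j))
    (ε : ℝ) (hε : 0 < ε) (nε : ℕ)
    (hcond : ∀ n : ℕ, nε ≤ n → ε * n ≤ ∑ j ∈ range n, p j * (1 - p j))
    (K C : ℝ) (hK : 0 < K) (hC : 6 * K / ε ≤ C)
    (f : ℝ → ℝ) (M : ℝ)
    (hM : ∀ t ∈ Set.Icc (-Real.pi) Real.pi, |f t| ≤ M)
    (n : ℕ) (hn1 : 1 ≤ n) (hn : nε ≤ n) :
    ‖∫ t in {t : ℝ | Real.sqrt (C * Real.log n / n) < |t| ∧ |t| ≤ Real.pi},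
        (f t : ℂ) * ∫ ω, Complex.exp (Complex.I * (t : ℂ) *
          (((∑ j ∈ range n, X j ω) - ∑ j ∈ range n, p j : ℝ) : ℂ)) ∂μ‖
      ≤ 2 * Real.pi * M * (n : ℝ) ^ (-K) := by
  have hM0 : 0 ≤ M := (abs_nonneg _).trans (hM 0 ⟨by linarith [Real.pi_pos], Real.pi_pos.le⟩)
  have hvar : ε * n ≤ ∑ j ∈ range n, μ.real {ω | X j ω = 1} * (1 - μ.real {ω | X j ω = 1}) :=
    (hcond n hn).trans (sum_le_sum fun j _ ↦ mul_one_sub_le_measureReal_mul_one_sub (hp j))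
  refine (norm_setIntegral_le_of_subset_Icc (B := M * (n : ℝ) ^ (-K)) (by linarith [Real.pi_pos])
    (fun t ht ↦ abs_le.mp ht.2) (by positivity) fun t ht ↦ ?_).trans_eq (by ring)
  obtain ⟨ht, htπ⟩ := ht
  rw [norm_mul, Complex.norm_real, Real.norm_eq_abs,
    norm_integral_exp_I_mul_sub_eq_norm_charFun (Finset.measurable_fun_sum _ fun j _ ↦ hmeas j)]
  refine mul_le_mul (hM t (abs_le.mp htπ)) ?_ (norm_nonneg _) hM0
  calc _ ≤ _ := norm_charFun_map_sum_le hmeas h01 hindep (range n) t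
    _ ≤ Real.exp (-(ε * n) * (1 - Real.cos t)) := by
        gcongr
        linarith [Real.cos_le_one t]
    _ ≤ (n : ℝ) ^ (-K) := exp_neg_mul_one_sub_cos_le_rpow hε hK hC hn1 ht htπ

/-- Lemma 2.3: under Condition 2.1 (`v_n² ≥ ε n` for `n ≥ n_ε`), for `K > 0`,
`C ≥ 6K/ε` and `a_n = √(C log n / n)`, for any bounded measurable `f` on `[-π, π]`
with bound `M`, `|∫_{a_n < |t| ≤ π} f(t) φ_n(t) dt| ≤ 2π M n^{-K}`. -/
theorem tail_integral_of_charFn_bound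
    {Ω : Type*} [MeasurableSpace Ω] (μ : Measure Ω) [IsProbabilityMeasure μ]
    (X : ℕ → Ω → ℝ) (p : ℕ → ℝ)
    (hmeas : ∀ j, Measurable (X j))
    (h01 : ∀ j ω, X j ω = 0 ∨ X j ω = 1)
    (hindep : iIndepFun X μ)
    (hp : ∀ j, μ {ω | X j ω = 1} = ENNReal.ofReal (p j))
    (ε : ℝ) (hε : 0 < ε) (nε : ℕ)
    (hcond : ∀ n : ℕ, nε ≤ n → ε * n ≤ ∑ j ∈ range n, p j * (1 - p j))
    (K C : ℝ) (hK : 0 < K) (hC : 6 * K / ε ≤ C)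
    (f : ℝ → ℝ) (hf : Measurable f) (M : ℝ)
    (hM : ∀ t ∈ Set.Icc (-Real.pi) Real.pi, |f t| ≤ M)
    (n : ℕ) (hn1 : 1 ≤ n) (hn : nε ≤ n)
    (ha : Real.sqrt (C * Real.log n / n) ≤ Real.pi) :
    ‖∫ t in {t : ℝ | Real.sqrt (C * Real.log n / n) < |t| ∧ |t| ≤ Real.pi},
        (f t : ℂ) * ∫ ω, Complex.exp (Complex.I * (t : ℂ) *
          (((∑ j ∈ range n, X j ω) - ∑ j ∈ range n, p j : ℝ) : ℂ)) ∂μ‖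
      ≤ 2 * Real.pi * M * (n : ℝ) ^ (-K) :=
  tail_integral_of_charFn_bound_general μ X p hmeas h01 hindep hp ε hε nε hcond K C hK hC f M hM n
    hn1 hn
end

section
/- Assume Condition 3.1 holds and let gamma be in (0, 1]. Then there exist epsilon_gamma > 0 and an integer n_gamma, depending only on gamma and the Condition 3.1 data, such that for every finite set E of natural numbers with |E| >= n_gamma and every lambda in [gamma, 1/gamma], v_{E,lambda}^2 = sum_{A in E} p_{A,lambda} q_{A,lambda} >= epsilon_gamma |E|. -/
open Finset

/-!
On the stable weights `x A ∈ [ε, ε⁻¹]` the odds `λ x A` lie in `[γ ε, (γ ε)⁻¹]` for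
`λ ∈ [γ, γ⁻¹]`, and there the Bernoulli variance `p q = t / (1 + t)²` of odds `t` is bounded below
uniformly. Condition 3.1 with `δ = 1/2` says that at least half of any large `E` is stable, and
the remaining terms are nonnegative.
-/

/-- The variance `p q` of a Bernoulli variable with odds `t`, i.e. with `p = t / (1 + t)`. -/
noncomputable def oddsVariance (t : ℝ) : ℝ :=
  t / (1 + t) * (1 - t / (1 + t))

lemma oddsVariance_eq {t : ℝ} (ht : 1 + t ≠ 0) : oddsVariance t = t / (1 + t) ^ 2 := by
  unfold oddsVariance
  field_simp
  ring

lemma oddsVariance_nonneg {t : ℝ} (ht : 0 ≤ t) : 0 ≤ oddsVariance t := by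
  rw [oddsVariance_eq (by positivity)]
  positivity

lemma div_one_add_sq_le_oddsVariance {t m M : ℝ} (hm : 0 < m) (hmt : m ≤ t) (htM : t ≤ M) :
    m / (1 + M) ^ 2 ≤ oddsVariance t := by
  have ht : 0 < t := hm.trans_le hmt
  rw [oddsVariance_eq (by positivity)]
  gcongr

lemma mul_card_filter_le_sum {ι : Type*} {E : Finset ι} {P : ι → Prop} [DecidablePred P]
    {f : ι → ℝ} {c : ℝ} (hf : ∀ i ∈ E, 0 ≤ f i) (hc : ∀ i ∈ E, P i → c ≤ f i) :
    c * #(E.filter P) ≤ ∑ i ∈ E, f i :=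
  calc c * #(E.filter P) = ∑ _ ∈ E.filter P, c := by rw [sum_const, nsmul_eq_mul, mul_comm]
    _ ≤ ∑ i ∈ E.filter P, f i := sum_le_sum fun i hi => hc i (mem_filter.1 hi).1 (mem_filter.1 hi).2
    _ ≤ ∑ i ∈ E, f i := sum_le_sum_of_subset_of_nonneg (filter_subset P E) fun i hi _ => hf i hi

lemma card_le_mul_card_filter_of_le_inv_mul_sum {ι : Type*} {E : Finset ι} {P : ι → Prop}
    [DecidablePred P] {δ : ℝ} (hE : E.Nonempty)
    (h : 1 - δ ≤ (#E : ℝ)⁻¹ * ∑ i ∈ E, if P i then (1 : ℝ) else 0) :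
    (1 - δ) * #E ≤ #(E.filter P) := by
  rwa [sum_boole, inv_mul_eq_div, le_div_iff₀ (by exact_mod_cast hE.card_pos)] at h

/-- Lemma 3.1: under Condition 3.1 on the weights `x`, for `γ ∈ (0,1]` there exist
`ε_γ > 0` and `n_γ` such that `v_{E,λ}² = ∑_{A ∈ E} p_{A,λ} q_{A,λ} ≥ ε_γ |E|` for all
`λ ∈ [γ, 1/γ]` and all finite `E` with `|E| ≥ n_γ`. -/
theorem variance_lower_bound_of_stable_weights
    (x : ℕ → ℝ) (hx : ∀ A, 0 < x A)
    (hcond : ∀ δ : ℝ, δ ∈ Set.Ioo (0 : ℝ) 1 → ∃ ε : ℝ, ε ∈ Set.Ioo (0 : ℝ) 1 ∧ ∃ n : ℕ, 1 ≤ n ∧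
      ∀ E : Finset ℕ, n ≤ E.card →
        1 - δ ≤ ((E.card : ℝ))⁻¹ * ∑ A ∈ E, (if x A ∈ Set.Icc ε ε⁻¹ then (1 : ℝ) else 0))
    (γ : ℝ) (hγ : γ ∈ Set.Ioc (0 : ℝ) 1) :
    ∃ εγ : ℝ, 0 < εγ ∧ ∃ nγ : ℕ, ∀ E : Finset ℕ, nγ ≤ E.card →
      ∀ lam : ℝ, lam ∈ Set.Icc γ γ⁻¹ →
        εγ * E.card ≤
          ∑ A ∈ E, (lam * x A / (1 + lam * x A)) * (1 - lam * x A / (1 + lam * x A)) := by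
  obtain ⟨hγ, -⟩ := hγ
  obtain ⟨ε, ⟨hε, -⟩, n, hn, hstable⟩ := hcond (1 / 2) ⟨by norm_num, by norm_num⟩
  set c := γ * ε / (1 + γ⁻¹ * ε⁻¹) ^ 2
  refine ⟨c / 2, by positivity, n, fun E hE lam ⟨hγlam, hlamγ⟩ => ?_⟩
  have hlam : 0 < lam := hγ.trans_le hγlam
  have hhalf : (1 - 1 / 2) * (#E : ℝ) ≤ #(E.filter fun A => x A ∈ Set.Icc ε ε⁻¹) :=
    card_le_mul_card_filter_of_le_inv_mul_sum (card_pos.1 (hn.trans hE)) (hstable E hE)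
  have hsum : c * #(E.filter fun A => x A ∈ Set.Icc ε ε⁻¹) ≤ ∑ A ∈ E, oddsVariance (lam * x A) :=
    mul_card_filter_le_sum (fun A _ => oddsVariance_nonneg (mul_pos hlam (hx A)).le)
      fun A _ ⟨hεx, hxε⟩ => div_one_add_sq_le_oddsVariance (by positivity)
        (mul_le_mul hγlam hεx hε.le hlam.le) (mul_le_mul hlamγ hxε (hx A).le (by positivity))
  calc c / 2 * #E = c * ((1 - 1 / 2) * #E) := by ring
    _ ≤ c * #(E.filter fun A => x A ∈ Set.Icc ε ε⁻¹) := by gcongr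
    _ ≤ _ := hsum
end

section
/- Let E be a finite set with positive weights x_A > 0 for A in E, let eta be an integer with 0 <= eta <= |E|, let A be an element of E, and set F = E \ {A}. Then for every lambda > 0, the rejective-sampling inclusion probability of A satisfies P_{E,eta}( A in D ) = p_{A,lambda} T_lambda( X_F = eta - 1 ) / ( p_{A,lambda} T_lambda( X_F = eta - 1 ) + q_{A,lambda} T_lambda( X_F = eta ) ), where p_{A,lambda} = lambda x_A / (1 + lambda x_A), q_{A,lambda} = 1 - p_{A,lambda}. -/
/-! Clearing the common factor `∏_{B ∈ F} (1 + λ x_B)⁻¹` turns `T_λ(X_F = k)` into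
`λ^k e_k(F)`, where `e_k(F) = ∑_{|u| = k, u ⊆ F} x_u`. Splitting the size-`(m+1)` subsets of
`E = insert A F` according to whether they contain `A` gives
`P_{E,m+1}(A ∈ D) = x_A e_m(F) / (x_A e_m(F) + e_{m+1}(F))`, and since `p_{A,λ} = λ x_A q_{A,λ}`
the right-hand side reduces to the same ratio after cancelling `q_{A,λ} λ^{m+1}`. -/

open Finset

/-- `p_{A,λ} = λ x_A / (1 + λ x_A)`. -/
noncomputable def bernProb (x : ℕ → ℝ) (lam : ℝ) (A : ℕ) : ℝ :=
  lam * x A / (1 + lam * x A)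

/-- `T_λ(X_F = k)`: the probability, under the product measure with independent Bernoulli
indicators of success probabilities `p_{A,λ}`, `A ∈ F`, that exactly `k` of them equal one;
interpreted as `0` for negative integers `k`. -/
noncomputable def TXeq (x : ℕ → ℝ) (lam : ℝ) (F : Finset ℕ) (k : ℤ) : ℝ :=
  if 0 ≤ k then
    ∑ u ∈ F.powersetCard k.toNat,
      (∏ A ∈ u, bernProb x lam A) * ∏ A ∈ F \ u, (1 - bernProb x lam A)
  else 0

/-- The rejective-sampling inclusion probability `P_{E,η}(A ∈ D)`, where
`P_{E,η}(D = d) = x_d / ∑_{u ⊆ E, |u| = η} x_u` on size-`η` subsets `d` of `E`. -/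
noncomputable def inclProb (x : ℕ → ℝ) (E : Finset ℕ) (η : ℕ) (A : ℕ) : ℝ :=
  (∑ d ∈ (E.powersetCard η).filter (fun d => A ∈ d), ∏ B ∈ d, x B) /
    ∑ d ∈ E.powersetCard η, ∏ B ∈ d, x B

section PowersetCardInsert

variable {α β : Type*} [DecidableEq α] [AddCommMonoid β] {A : α} {F : Finset α}

lemma filter_notMem_powersetCard_insert (hA : A ∉ F) (n : ℕ) :
    (powersetCard n (insert A F)).filter (A ∉ ·) = powersetCard n F := by
  ext d
  simp only [mem_filter, mem_powersetCard]
  constructor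
  · rintro ⟨⟨hd, hcard⟩, hAd⟩
    exact ⟨(subset_insert_iff_of_notMem hAd).mp hd, hcard⟩
  · rintro ⟨hd, hcard⟩
    exact ⟨⟨hd.trans (subset_insert A F), hcard⟩, fun h => hA (hd h)⟩

lemma filter_mem_powersetCard_succ_insert (hA : A ∉ F) (n : ℕ) :
    (powersetCard (n + 1) (insert A F)).filter (A ∈ ·) = (powersetCard n F).image (insert A) := by
  rw [powersetCard_succ_insert hA, filter_union, filter_eq_empty_iff.mpr, filter_eq_self.mpr,
    empty_union]
  · simp only [mem_image]
    rintro _ ⟨u, -, rfl⟩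
    exact mem_insert_self A u
  · exact fun d hd hAd => hA ((mem_powersetCard.mp hd).1 hAd)

lemma sum_filter_mem_powersetCard_succ_insert (hA : A ∉ F) (n : ℕ) (f : Finset α → β) :
    ∑ d ∈ (powersetCard (n + 1) (insert A F)).filter (A ∈ ·), f d =
      ∑ u ∈ powersetCard n F, f (insert A u) := by
  rw [filter_mem_powersetCard_succ_insert hA, sum_image]
  intro u hu v hv huv
  have hAu : A ∉ u := fun h => hA ((mem_powersetCard.mp hu).1 h)
  have hAv : A ∉ v := fun h => hA ((mem_powersetCard.mp hv).1 h)
  rw [← erase_insert hAu, ← erase_insert hAv]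
  exact congrArg (erase · A) huv

end PowersetCardInsert

section InclProb

variable {x : ℕ → ℝ} {A : ℕ} {F : Finset ℕ}

lemma inclProb_zero (E : Finset ℕ) : inclProb x E 0 A = 0 := by
  simp [inclProb, filter_singleton]

lemma inclProb_insert_succ (hA : A ∉ F) (m : ℕ) :
    inclProb x (insert A F) (m + 1) A =
      x A * (∑ u ∈ F.powersetCard m, ∏ B ∈ u, x B) /
        (x A * (∑ u ∈ F.powersetCard m, ∏ B ∈ u, x B) +
          ∑ u ∈ F.powersetCard (m + 1), ∏ B ∈ u, x B) := by
  have hmem : ∑ d ∈ (powersetCard (m + 1) (insert A F)).filter (A ∈ ·), ∏ B ∈ d, x B =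
      x A * ∑ u ∈ F.powersetCard m, ∏ B ∈ u, x B := by
    rw [sum_filter_mem_powersetCard_succ_insert hA, mul_sum]
    refine sum_congr rfl fun u hu => prod_insert fun h => hA ((mem_powersetCard.mp hu).1 h)
  unfold inclProb
  rw [hmem, ← sum_filter_add_sum_filter_not (powersetCard (m + 1) (insert A F)) (A ∈ ·), hmem,
    filter_notMem_powersetCard_insert hA]

end InclProb

section Bernoulli

variable {x : ℕ → ℝ} {lam : ℝ} {A : ℕ}

lemma one_sub_bernProb (h : 1 + lam * x A ≠ 0) : 1 - bernProb x lam A = (1 + lam * x A)⁻¹ := by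
  unfold bernProb
  field_simp
  ring

lemma bernProb_eq_mul_one_sub (h : 1 + lam * x A ≠ 0) :
    bernProb x lam A = lam * x A * (1 - bernProb x lam A) := by
  rw [one_sub_bernProb h, bernProb, div_eq_mul_inv]

lemma prod_bernProb_mul_prod_sdiff {F u : Finset ℕ} (hne : ∀ B ∈ F, 1 + lam * x B ≠ 0)
    (hu : u ⊆ F) :
    (∏ B ∈ u, bernProb x lam B) * ∏ B ∈ F \ u, (1 - bernProb x lam B) =
      lam ^ u.card * (∏ B ∈ u, x B) / ∏ B ∈ F, (1 + lam * x B) := by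
  rw [prod_congr rfl fun B hB => one_sub_bernProb (hne B (sdiff_subset hB)), ← prod_sdiff hu,
    prod_inv_distrib]
  simp only [bernProb, prod_div_distrib, prod_mul_distrib, prod_const]
  field_simp

lemma TXeq_of_neg (F : Finset ℕ) {k : ℤ} (hk : k < 0) : TXeq x lam F k = 0 :=
  if_neg (not_le.mpr hk)

lemma TXeq_natCast {F : Finset ℕ} (hne : ∀ B ∈ F, 1 + lam * x B ≠ 0) (k : ℕ) :
    TXeq x lam F k =
      lam ^ k * (∑ u ∈ F.powersetCard k, ∏ B ∈ u, x B) / ∏ B ∈ F, (1 + lam * x B) := by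
  rw [TXeq, if_pos (Int.natCast_nonneg k), Int.toNat_natCast, mul_sum, sum_div]
  refine sum_congr rfl fun u hu => ?_
  obtain ⟨hsub, hcard⟩ := mem_powersetCard.mp hu
  rw [prod_bernProb_mul_prod_sdiff hne hsub, hcard]

lemma div_eq_bernProb_ratio (hxA : 1 + lam * x A ≠ 0) (hlam : lam ≠ 0) {P : ℝ} (hP : P ≠ 0)
    (m : ℕ) (a b : ℝ) :
    x A * a / (x A * a + b) =
      bernProb x lam A * (lam ^ m * a / P) /
        (bernProb x lam A * (lam ^ m * a / P) +
          (1 - bernProb x lam A) * (lam ^ (m + 1) * b / P)) := by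
  set t := (1 - bernProb x lam A) * lam ^ (m + 1) / P
  have ht : t ≠ 0 := by
    have : 1 - bernProb x lam A ≠ 0 := by rw [one_sub_bernProb hxA]; exact inv_ne_zero hxA
    positivity
  have hp : bernProb x lam A * (lam ^ m * a / P) = t * (x A * a) := by
    rw [bernProb_eq_mul_one_sub hxA]
    ring
  have hq : (1 - bernProb x lam A) * (lam ^ (m + 1) * b / P) = t * b := by ring
  rw [hp, hq, ← mul_add, mul_div_mul_left _ _ ht]

end Bernoulli

theorem inclProb_eq_bernoulli_ratio_general
    (x : ℕ → ℝ) (hx : ∀ A, 0 < x A) (E : Finset ℕ) (A : ℕ) (hA : A ∈ E)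
    (η : ℕ) (lam : ℝ) (hlam : 0 < lam) :
    inclProb x E η A =
      bernProb x lam A * TXeq x lam (E.erase A) ((η : ℤ) - 1) /
        (bernProb x lam A * TXeq x lam (E.erase A) ((η : ℤ) - 1) +
          (1 - bernProb x lam A) * TXeq x lam (E.erase A) (η : ℤ)) := by
  have hne : ∀ B, 1 + lam * x B ≠ 0 := fun B => by have := hx B; positivity
  obtain ⟨F, hAF, rfl⟩ : ∃ F, A ∉ F ∧ E = insert A F :=
    ⟨E.erase A, notMem_erase A E, (insert_erase hA).symm⟩
  rw [erase_insert hAF]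
  cases η with
  | zero =>
    rw [inclProb_zero, Nat.cast_zero, TXeq_of_neg F (by norm_num), mul_zero, zero_div]
  | succ m =>
    have hP : ∏ B ∈ F, (1 + lam * x B) ≠ 0 := prod_ne_zero_iff.mpr fun B _ => hne B
    rw [inclProb_insert_succ hAF, Nat.cast_succ, add_sub_cancel_right, ← Nat.cast_succ,
      TXeq_natCast (fun B _ => hne B), TXeq_natCast (fun B _ => hne B)]
    exact div_eq_bernProb_ratio (hne A) hlam.ne' hP m _ _

/-- Lemma 3.5, equation (44): for `A ∈ E` and `F = E \ {A}`, for every `λ > 0`,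
`P_{E,η}(A ∈ D) = p_{A,λ} T_λ(X_F = η-1) / (p_{A,λ} T_λ(X_F = η-1) + q_{A,λ} T_λ(X_F = η))`. -/
theorem inclProb_eq_bernoulli_ratio
    (x : ℕ → ℝ) (hx : ∀ A, 0 < x A) (E : Finset ℕ) (A : ℕ) (hA : A ∈ E)
    (η : ℕ) (hη : η ≤ E.card) (lam : ℝ) (hlam : 0 < lam) :
    inclProb x E η A =
      bernProb x lam A * TXeq x lam (E.erase A) ((η : ℤ) - 1) /
        (bernProb x lam A * TXeq x lam (E.erase A) ((η : ℤ) - 1) +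
          (1 - bernProb x lam A) * TXeq x lam (E.erase A) (η : ℤ)) :=
  inclProb_eq_bernoulli_ratio_general x hx E A hA η lam hlam
end

section
/- Let E be a finite set with positive weights x_A > 0, let u and v be disjoint subsets of E, let A be an element of E \ (u union v), let H be a subset of E \ (u union v union {A}), and let eta be an integer with |u| + |H| <= eta and eta + |v| + |H| <= |E|. Then Delta^H P^{u,v}_{E,eta}( A in D ) = (-1)^{|H|} Delta^{|H|} P^{u,v}_{E \ H, eta}( A in D ), where on the left Delta^H is the iterated set-conditioning difference over the elements of H, and on the right Delta^{t} is the t-fold difference in the sample size: Delta f(eta) = f(eta) - f(eta - 1) applied to eta -> P^{u,v}_{E \ H, eta}( A in D ). -/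
/-!
Conditioning on `B ∉ D` just deletes `B` from the ground set. Conditioning on `B ∈ D` also deletes
`B` but lowers the sample size by one: `d ↦ d \ {B}` is a bijection between the two supports, and
the common factor `x_B` cancels between numerator and denominator. Hence
`Δ^B P^{u,v}_{E,η} = P^{u,v}_{E∖B,η-1} - P^{u,v}_{E∖B,η} = -Δ P^{u,v}_{E∖B,η}`, and iterating over
`H` gives the theorem.
-/

open Finset

/-- The conditioned rejective sampling measure `P^{u,v}_{E,η}(D = d)`. -/
noncomputable def condP (x : ℕ → ℝ) (E : Finset ℕ) (η : ℕ) (u v d : Finset ℕ) : ℝ :=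
  if u ⊆ d ∧ Disjoint d v ∧ d ⊆ E ∧ d.card = η then
    (∏ A ∈ d, x A) /
      ∑ w ∈ (E.powersetCard η).filter (fun w => u ⊆ w ∧ Disjoint w v), ∏ A ∈ w, x A
  else 0

/-- The inclusion probability `P^{u,v}_{E,η}(A ∈ D)`. -/
noncomputable def condIncl (x : ℕ → ℝ) (E : Finset ℕ) (η : ℕ) (u v : Finset ℕ) (A : ℕ) : ℝ :=
  ∑ d ∈ E.powerset.filter (fun d => A ∈ d), condP x E η u v d

/-- The iterated set-conditioning difference:
`Δ^B f (u, v) = f (u ∪ {B}, v) - f (u, v ∪ {B})`, iterated over a list of elements. -/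
noncomputable def deltaIter (f : Finset ℕ → Finset ℕ → ℝ) :
    List ℕ → Finset ℕ → Finset ℕ → ℝ
  | [], u, v => f u v
  | B :: L, u, v => deltaIter f L (insert B u) v - deltaIter f L u (insert B v)

/-- The `t`-fold difference in the sample size: `Δ f (η) = f (η) - f (η - 1)`. -/
noncomputable def natDelta (f : ℕ → ℝ) : ℕ → ℕ → ℝ
  | 0, η => f η
  | t + 1, η => natDelta f t η - natDelta f t (η - 1)

/-- Support of the conditioned measure `P^{u,v}_{E,η}`. -/
def admissible {α : Type*} [DecidableEq α] (E : Finset α) (η : ℕ) (u v : Finset α) :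
    Finset (Finset α) :=
  (E.powersetCard η).filter (fun w => u ⊆ w ∧ Disjoint w v)

section Admissible

variable {α : Type*} [DecidableEq α] (E : Finset α) (η : ℕ) (u v : Finset α) (B : α)

theorem admissible_insert_right :
    admissible E η u (insert B v) = admissible (E.erase B) η u v := by
  ext w
  simp only [admissible, mem_filter, mem_powersetCard, disjoint_insert_right, subset_erase]
  tauto

theorem notMem_of_mem_admissible_erase {w : Finset α} (hw : w ∈ admissible (E.erase B) η u v) :
    B ∉ w := fun hB => by
  simp only [admissible, mem_filter, mem_powersetCard] at hw
  simpa using hw.1.1 hB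

variable {E u v B}

theorem sum_admissible_insert_left {M : Type*} [AddCommMonoid M] (n : ℕ) (g : Finset α → M)
    (hB : B ∈ E) (hBu : B ∉ u) (hBv : B ∉ v) :
    ∑ w ∈ admissible E (n + 1) (insert B u) v, g w =
      ∑ w ∈ admissible (E.erase B) n u v, g (insert B w) := by
  refine sum_nbij' (fun w => w.erase B) (insert B) ?_ ?_ ?_ ?_ ?_
  · intro w hw
    simp only [admissible, mem_filter, mem_powersetCard, insert_subset_iff] at hw ⊢
    obtain ⟨⟨hwE, hwc⟩, ⟨hBw, huw⟩, hwv⟩ := hw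
    refine ⟨⟨erase_subset_erase B hwE, by rw [card_erase_of_mem hBw, hwc]; rfl⟩, ?_,
      disjoint_of_subset_left (erase_subset B w) hwv⟩
    exact fun a ha => mem_erase_of_ne_of_mem (fun h => hBu (h ▸ ha)) (huw ha)
  · intro w hw
    have hBw := notMem_of_mem_admissible_erase E n u v B hw
    simp only [admissible, mem_filter, mem_powersetCard,
      subset_erase] at hw ⊢
    obtain ⟨⟨⟨hwE, -⟩, hwc⟩, huw, hwv⟩ := hw
    exact ⟨⟨insert_subset hB hwE, by rw [card_insert_of_notMem hBw, hwc]⟩,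
      insert_subset_insert B huw, disjoint_insert_left.mpr ⟨hBv, hwv⟩⟩
  · intro w hw
    simp only [admissible, mem_filter, insert_subset_iff] at hw
    exact insert_erase hw.2.1.1
  · intro w hw
    exact erase_insert (notMem_of_mem_admissible_erase E n u v B hw)
  · intro w hw
    simp only [admissible, mem_filter, insert_subset_iff] at hw
    rw [insert_erase hw.2.1.1]

end Admissible

section CondIncl

variable (x : ℕ → ℝ) (E : Finset ℕ) (η : ℕ) (u v : Finset ℕ) (A B : ℕ)

theorem condIncl_eq_div :
    condIncl x E η u v A =
      (∑ d ∈ admissible E η u v, if A ∈ d then ∏ a ∈ d, x a else 0) /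
        ∑ d ∈ admissible E η u v, ∏ a ∈ d, x a := by
  simp only [condIncl, condP, sum_div, ← sum_filter]
  refine sum_congr ?_ fun _ _ => rfl
  ext d
  simp only [admissible, mem_filter, mem_powerset, mem_powersetCard]
  tauto

theorem condIncl_insert_right :
    condIncl x E η u (insert B v) A = condIncl x (E.erase B) η u v A := by
  rw [condIncl_eq_div, condIncl_eq_div, admissible_insert_right]

theorem condIncl_zero : condIncl x E 0 u v A = 0 := by
  refine sum_eq_zero fun d hd => if_neg fun h => ?_
  rw [card_eq_zero.mp h.2.2.2] at hd
  simp at hd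

variable {x E u v A B}

theorem condIncl_insert_left (hx : ∀ a, 0 < x a) (hB : B ∈ E) (hBu : B ∉ u) (hBv : B ∉ v)
    (hBA : B ≠ A) :
    condIncl x E η (insert B u) v A = condIncl x (E.erase B) (η - 1) u v A := by
  rcases η with _ | n
  · rw [condIncl_zero, condIncl_zero]
  have hprod : ∀ w ∈ admissible (E.erase B) n u v, ∏ a ∈ insert B w, x a = x B * ∏ a ∈ w, x a :=
    fun w hw => prod_insert (notMem_of_mem_admissible_erase E n u v B hw)
  have hnum : ∀ w ∈ admissible (E.erase B) n u v,
      (if A ∈ insert B w then ∏ a ∈ insert B w, x a else 0) =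
        x B * if A ∈ w then ∏ a ∈ w, x a else 0 := fun w hw => by
    simp only [hprod w hw, mul_ite_zero, mem_insert, hBA.symm, false_or]
  rw [condIncl_eq_div, condIncl_eq_div, sum_admissible_insert_left n _ hB hBu hBv,
    sum_admissible_insert_left n _ hB hBu hBv, sum_congr rfl hprod, sum_congr rfl hnum, ← mul_sum,
    ← mul_sum, mul_div_mul_left _ _ (hx B).ne', Nat.add_sub_cancel]

end CondIncl

theorem natDelta_comp_pred (f : ℕ → ℝ) (t η : ℕ) :
    natDelta (fun m => f (m - 1)) t η = natDelta f t (η - 1) := by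
  induction t generalizing η with
  | zero => rfl
  | succ t ih => simp only [natDelta, ih]

theorem deltaIter_condIncl_eq_natDelta_of_nodup {x : ℕ → ℝ} (hx : ∀ a, 0 < x a) (E : Finset ℕ)
    (η A : ℕ) (L : List ℕ) (hL : L.Nodup) (u v : Finset ℕ)
    (hLE : ∀ B ∈ L, B ∈ E \ (u ∪ v ∪ {A})) :
    deltaIter (fun u' v' => condIncl x E η u' v' A) L u v =
      (-1 : ℝ) ^ L.length * natDelta (fun m => condIncl x (E \ L.toFinset) m u v A) L.length η := by
  induction L generalizing u v with
  | nil => simp [deltaIter, natDelta]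
  | cons B L ih =>
    obtain ⟨hBL, hL⟩ := List.nodup_cons.mp hL
    have hB := hLE B List.mem_cons_self
    simp only [mem_sdiff, mem_union, mem_singleton, not_or] at hB
    obtain ⟨hBE, ⟨hBu, hBv⟩, hBA⟩ := hB
    have hLB (C) (hC : C ∈ L) : C ≠ B ∧ C ∈ E \ (u ∪ v ∪ {A}) :=
      ⟨fun h => hBL (h ▸ hC), hLE C (List.mem_cons_of_mem B hC)⟩
    have hB' : B ∈ E \ L.toFinset := mem_sdiff.mpr ⟨hBE, by simpa using hBL⟩
    rw [deltaIter, ih hL (insert B u) v fun C hC => by grind,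
      ih hL u (insert B v) fun C hC => by grind]
    simp only [condIncl_insert_left _ hx hB' hBu hBv hBA, condIncl_insert_right, ← sdiff_insert,
      List.toFinset_cons]
    rw [natDelta_comp_pred (fun m => condIncl x (E \ insert B L.toFinset) m u v A)]
    simp only [List.length_cons, natDelta, pow_succ]
    ring

theorem deltaIter_condIncl_eq_natDelta_general
    (x : ℕ → ℝ) (hx : ∀ A, 0 < x A)
    (E u v H : Finset ℕ) (A : ℕ)
    (hH : H ⊆ E \ (u ∪ v ∪ {A}))
    (η : ℕ) :
    deltaIter (fun u' v' => condIncl x E η u' v' A) (H.sort (· ≤ ·)) u v =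
      (-1 : ℝ) ^ H.card * natDelta (fun m => condIncl x (E \ H) m u v A) H.card η := by
  simpa using deltaIter_condIncl_eq_natDelta_of_nodup hx E η A _ (H.sort_nodup (· ≤ ·)) u v
    fun B hB => hH ((mem_sort _).mp hB)

/-- Lemma 4.1, equation (54): for `A ∉ u ∪ v`, `H ⊆ E \ (u ∪ v ∪ {A})`,
`Δ^H P^{u,v}_{E,η}(A ∈ D) = (-1)^{|H|} Δ^{|H|} P^{u,v}_{E \ H, η}(A ∈ D)`,
where on the right `Δ^t` is the `t`-fold difference in the sample size `η`. -/
theorem deltaIter_condIncl_eq_natDelta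
    (x : ℕ → ℝ) (hx : ∀ A, 0 < x A)
    (E u v H : Finset ℕ) (A : ℕ)
    (huv : Disjoint u v) (hu : u ⊆ E) (hv : v ⊆ E)
    (hA : A ∈ E \ (u ∪ v)) (hH : H ⊆ E \ (u ∪ v ∪ {A}))
    (η : ℕ) (h1 : u.card + H.card ≤ η) (h2 : η + v.card + H.card ≤ E.card) :
    deltaIter (fun u' v' => condIncl x E η u' v' A) (H.sort (· ≤ ·)) u v =
      (-1 : ℝ) ^ H.card * natDelta (fun m => condIncl x (E \ H) m u v A) H.card η :=
  deltaIter_condIncl_eq_natDelta_general x hx E u v H A hH η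
end

section
/- Let E be a finite set with positive weights x_A > 0, let u and v be disjoint subsets of E, let A be in E \ (u union v), and let eta be an integer with |u| + 1 <= eta and eta + |v| + 1 <= |E|. Then for every real-valued function V of the random set D, E^{u,v}_{E,eta}[ (I_A - p_A) V ] = ( p_A^{u,v} - p_A ) E^{u,v}_{E,eta}[ V ] + p_A^{u,v} q_A^{u,v} ( E^{u union {A}, v}_{E,eta}[ V ] - E^{u, v union {A}}_{E,eta}[ V ] ), where I_A = 1( A in D ), p_A = P_{E,eta}( A in D ), p_A^{u,v} = P^{u,v}_{E,eta}( A in D ), and q_A^{u,v} = 1 - p_A^{u,v}. -/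
open Finset

private lemma filter_eq_aux (E : Finset ℕ) (η : ℕ) (u v : Finset ℕ) :
    E.powerset.filter (fun d => u ⊆ d ∧ Disjoint d v ∧ d ⊆ E ∧ d.card = η)
      = (E.powersetCard η).filter (fun w => u ⊆ w ∧ Disjoint w v) := by
  ext d
  simp only [mem_filter, mem_powerset, mem_powersetCard]
  tauto

private lemma sumP (x : ℕ → ℝ) (E : Finset ℕ) (η : ℕ) (u v : Finset ℕ) (f : Finset ℕ → ℝ) :
    ∑ d ∈ E.powerset, condP x E η u v d * f d
      = (∑ d ∈ (E.powersetCard η).filter (fun w => u ⊆ w ∧ Disjoint w v),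
          (∏ B ∈ d, x B) * f d)
        / (∑ w ∈ (E.powersetCard η).filter (fun w => u ⊆ w ∧ Disjoint w v), ∏ B ∈ w, x B) := by
  have h : ∑ d ∈ E.powerset, condP x E η u v d * f d
      = ∑ d ∈ E.powerset.filter (fun d => u ⊆ d ∧ Disjoint d v ∧ d ⊆ E ∧ d.card = η),
          ((∏ B ∈ d, x B)
            / (∑ w ∈ (E.powersetCard η).filter (fun w => u ⊆ w ∧ Disjoint w v), ∏ B ∈ w, x B))
          * f d := by
    rw [sum_filter]
    refine sum_congr rfl fun d _ => ?_
    unfold condP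
    split <;> simp
  rw [h, filter_eq_aux]
  simp_rw [div_mul_eq_mul_div, ← sum_div]

private lemma condIncl_eq (x : ℕ → ℝ) (E : Finset ℕ) (η : ℕ) (u v : Finset ℕ) (A : ℕ) :
    condIncl x E η u v A =
      (∑ w ∈ (E.powersetCard η).filter (fun w => insert A u ⊆ w ∧ Disjoint w v), ∏ B ∈ w, x B)
        / (∑ w ∈ (E.powersetCard η).filter (fun w => u ⊆ w ∧ Disjoint w v), ∏ B ∈ w, x B) := by
  unfold condIncl
  have h : ∑ d ∈ E.powerset.filter (fun d => A ∈ d), condP x E η u v d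
      = ∑ d ∈ (E.powerset.filter (fun d => A ∈ d)).filter
          (fun d => u ⊆ d ∧ Disjoint d v ∧ d ⊆ E ∧ d.card = η),
          ((∏ B ∈ d, x B)
            / (∑ w ∈ (E.powersetCard η).filter (fun w => u ⊆ w ∧ Disjoint w v), ∏ B ∈ w, x B)) := by
    rw [sum_filter (s := E.powerset.filter (fun d => A ∈ d))]
    refine sum_congr rfl fun d _ => ?_
    unfold condP
    split <;> simp
  rw [h]
  rw [show (E.powerset.filter (fun d => A ∈ d)).filter
        (fun d => u ⊆ d ∧ Disjoint d v ∧ d ⊆ E ∧ d.card = η)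
      = (E.powersetCard η).filter (fun w => insert A u ⊆ w ∧ Disjoint w v) by
    ext d
    simp only [mem_filter, mem_powerset, mem_powersetCard, insert_subset_iff]
    tauto]
  rw [sum_div]

private lemma split_sum (E : Finset ℕ) (η : ℕ) (u v : Finset ℕ) (A : ℕ) (f : Finset ℕ → ℝ) :
    ∑ d ∈ (E.powersetCard η).filter (fun w => u ⊆ w ∧ Disjoint w v), f d
      = (∑ d ∈ (E.powersetCard η).filter (fun w => insert A u ⊆ w ∧ Disjoint w v), f d)
        + ∑ d ∈ (E.powersetCard η).filter (fun w => u ⊆ w ∧ Disjoint w (insert A v)), f d := by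
  rw [← sum_filter_add_sum_filter_not
    ((E.powersetCard η).filter (fun w => u ⊆ w ∧ Disjoint w v)) (fun w => A ∈ w)]
  congr 1
  · apply sum_congr _ (fun _ _ => rfl)
    ext w
    simp only [mem_filter, mem_powersetCard, insert_subset_iff]
    tauto
  · apply sum_congr _ (fun _ _ => rfl)
    ext w
    simp only [mem_filter, mem_powersetCard, disjoint_insert_right]
    tauto

/-- Lemma 4.4: for `A ∉ u ∪ v` and any function `V` of the random set `D`,
`E^{u,v}_{E,η}[(I_A - p_A) V] = (p_A^{u,v} - p_A) E^{u,v}_{E,η}[V]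
  + p_A^{u,v} q_A^{u,v} (E^{u∪{A},v}_{E,η}[V] - E^{u,v∪{A}}_{E,η}[V])`,
where `p_A = P_{E,η}(A ∈ D)`, `p_A^{u,v} = P^{u,v}_{E,η}(A ∈ D)`, `q_A^{u,v} = 1 - p_A^{u,v}`. -/
theorem expectation_indicator_decomposition
    (x : ℕ → ℝ) (hx : ∀ A, 0 < x A)
    (E u v : Finset ℕ) (A : ℕ)
    (huv : Disjoint u v) (hu : u ⊆ E) (hv : v ⊆ E)
    (hA : A ∈ E) (hAuv : A ∉ u ∪ v)
    (η : ℕ) (h1 : u.card + 1 ≤ η) (h2 : η + v.card + 1 ≤ E.card)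
    (V : Finset ℕ → ℝ) :
    ∑ d ∈ E.powerset,
        condP x E η u v d * ((if A ∈ d then (1 : ℝ) else 0) - condIncl x E η ∅ ∅ A) * V d =
      (condIncl x E η u v A - condIncl x E η ∅ ∅ A) *
          ∑ d ∈ E.powerset, condP x E η u v d * V d +
        condIncl x E η u v A * (1 - condIncl x E η u v A) *
          ((∑ d ∈ E.powerset, condP x E η (insert A u) v d * V d) -
            ∑ d ∈ E.powerset, condP x E η u (insert A v) d * V d) := by
  have hAu : A ∉ u := fun h => hAuv (mem_union_left _ h)
  have hAv : A ∉ v := fun h => hAuv (mem_union_right _ h)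
  set Fa := (E.powersetCard η).filter (fun w => insert A u ⊆ w ∧ Disjoint w v) with hFa
  set Fb := (E.powersetCard η).filter (fun w => u ⊆ w ∧ Disjoint w (insert A v)) with hFb
  set sa := ∑ w ∈ Fa, ∏ B ∈ w, x B with hsa
  set sb := ∑ w ∈ Fb, ∏ B ∈ w, x B with hsb
  set Ta := ∑ w ∈ Fa, (∏ B ∈ w, x B) * V w with hTa
  set Tb := ∑ w ∈ Fb, (∏ B ∈ w, x B) * V w with hTb
  set c := condIncl x E η ∅ ∅ A with hc
  -- nonemptiness of Fa
  have hFane : Fa.Nonempty := by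
    obtain ⟨w, hw1, hw2, hw3⟩ := exists_subsuperset_card_eq
      (t := E \ v) (n := η)
      (by
        rw [insert_subset_iff, subset_sdiff]
        exact ⟨mem_sdiff.2 ⟨hA, hAv⟩, hu, huv⟩)
      (by rw [card_insert_of_notMem hAu]; exact h1)
      (by rw [card_sdiff_of_subset hv]; omega)
    exact ⟨w, by
      simp only [hFa, mem_filter, mem_powersetCard]
      exact ⟨⟨hw2.trans sdiff_subset, hw3⟩, hw1,
        disjoint_of_subset_left hw2 sdiff_disjoint⟩⟩
  have hFbne : Fb.Nonempty := by
    obtain ⟨w, hw1, hw2, hw3⟩ := exists_subsuperset_card_eq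
      (t := E \ insert A v) (n := η)
      (by
        rw [subset_sdiff]
        exact ⟨hu, by rw [disjoint_insert_right]; exact ⟨hAu, huv⟩⟩)
      (by omega)
      (by
        rw [card_sdiff_of_subset (by rw [insert_subset_iff]; exact ⟨hA, hv⟩),
          card_insert_of_notMem hAv]
        omega)
    exact ⟨w, by
      simp only [hFb, mem_filter, mem_powersetCard]
      exact ⟨⟨hw2.trans sdiff_subset, hw3⟩, hw1,
        disjoint_of_subset_left hw2 sdiff_disjoint⟩⟩
  have hsapos : 0 < sa := sum_pos (fun w _ => prod_pos fun B _ => hx B) hFane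
  have hsbpos : 0 < sb := sum_pos (fun w _ => prod_pos fun B _ => hx B) hFbne
  -- the basic sums
  have hsu : (∑ w ∈ (E.powersetCard η).filter (fun w => u ⊆ w ∧ Disjoint w v), ∏ B ∈ w, x B)
      = sa + sb := split_sum E η u v A _
  have hT : (∑ d ∈ (E.powersetCard η).filter (fun w => u ⊆ w ∧ Disjoint w v),
      (∏ B ∈ d, x B) * V d) = Ta + Tb := split_sum E η u v A _
  -- LHS
  have hLHS : ∑ d ∈ E.powerset,
      condP x E η u v d * ((if A ∈ d then (1 : ℝ) else 0) - c) * V d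
      = ((1 - c) * Ta - c * Tb) / (sa + sb) := by
    have := sumP x E η u v (fun d => ((if A ∈ d then (1 : ℝ) else 0) - c) * V d)
    simp_rw [← mul_assoc] at this
    rw [this, hsu, split_sum E η u v A]
    congr 1
    have ha : ∑ d ∈ (E.powersetCard η).filter (fun w => insert A u ⊆ w ∧ Disjoint w v),
        (∏ B ∈ d, x B) * ((if A ∈ d then (1 : ℝ) else 0) - c) * V d
        = (1 - c) * Ta := by
      rw [hTa, mul_sum]
      refine sum_congr rfl fun d hd => ?_
      have : A ∈ d := by
        simp only [hFa, mem_filter, insert_subset_iff] at hd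
        exact hd.2.1.1
      rw [if_pos this]; ring
    have hb : ∑ d ∈ (E.powersetCard η).filter (fun w => u ⊆ w ∧ Disjoint w (insert A v)),
        (∏ B ∈ d, x B) * ((if A ∈ d then (1 : ℝ) else 0) - c) * V d
        = -(c * Tb) := by
      rw [hTb, ← neg_mul, mul_sum]
      refine sum_congr rfl fun d hd => ?_
      have : A ∉ d := by
        simp only [hFb, mem_filter, disjoint_insert_right] at hd
        exact hd.2.2.1
      rw [if_neg this]; ring
    rw [ha, hb]; ring
  rw [hLHS, condIncl_eq x E η u v A, sumP x E η u v V, sumP x E η (insert A u) v V,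
    sumP x E η u (insert A v) V, hsu, hT]
  rw [← hFa, ← hFb, ← hsa, ← hsb, ← hTa, ← hTb]
  field_simp
  ring
end
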